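/- arXiv:1402.2795 — 8 statements merged into one kernel-verified Lean document; each statement's English description precedes it below -/
import Mathlib

section
/- Let V be a real linear space of entire functions on ℂⁿ such that every non-zero element of V has no zeros in a set Ω ⊆ ℂⁿ with nonempty interior. Then V has real dimension at most 2. -/
open Complex

theorem stmt_1 (n : ℕ) (Ω : Set (Fin n → ℂ)) (hΩ : (interior Ω).Nonempty)
    (V : Submodule ℝ ((Fin n → ℂ) → ℂ))
    (hent : ∀ f ∈ V, Differentiable ℂ f)
    (hnz : ∀ f ∈ V, f ≠ 0 → ∀ z ∈ Ω, f z ≠ 0) :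
    Module.rank ℝ V ≤ 2 := by
  obtain ⟨z₀, hz₀⟩ := hΩ
  have hz₀Ω : z₀ ∈ Ω := interior_subset hz₀
  let L : V →ₗ[ℝ] ℂ :=
    { toFun := fun f => (f : (Fin n → ℂ) → ℂ) z₀
      map_add' := fun f g => rfl
      map_smul' := fun c f => rfl }
  have hinj : Function.Injective L := by
    rw [injective_iff_map_eq_zero]
    intro f hf
    by_contra hne
    have hfne : (f : (Fin n → ℂ) → ℂ) ≠ 0 := by
      intro h
      exact hne (Subtype.ext h)
    exact hnz f f.2 hfne z₀ hz₀Ω hf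
  calc Module.rank ℝ V ≤ Module.rank ℝ ℂ := LinearMap.rank_le_of_injective L hinj
    _ = 2 := Complex.rank_real_complex
end

section
/- Let f, g be entire functions on ℂⁿ, Ω ⊆ ℂⁿ a connected set, and C ⊆ ℂ a closed set whose complement has exactly two connected components A and B. If the function h(z,w) = f(z) + w·g(z) is non-zero for all z ∈ Ω and w ∈ C, and g is non-zero on Ω, then either h is non-zero on Ω × (A ∪ C) or h is non-zero on Ω × (B ∪ C). -/
/-!
For `z ∈ Ω` the only zero of `w ↦ f z + w * g z` is `φ z = -f z / g z`, a continuous function on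
the connected set `Ω` (as `g ≠ 0` there). The hypothesis on `C` says `φ` maps `Ω` into
`Cᶜ = A ∪ B`, a union of two disjoint open sets, so `φ '' Ω` lies entirely in one of them, say
`A`; then `f z + w * g z` has no zero with `w` in the complement `B ∪ C` of `A`.
-/

open Complex Set

lemma add_mul_eq_zero_iff_eq_neg_div {K : Type*} [Field K] {a b w : K} (hb : b ≠ 0) :
    a + w * b = 0 ↔ w = -a / b := by
  rw [eq_div_iff hb, add_comm, add_eq_zero_iff_eq_neg]

lemma IsPreconnected.mapsTo_or_mapsTo {X Y : Type*} [TopologicalSpace X] [TopologicalSpace Y]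
    {s : Set X} {φ : X → Y} {u v : Set Y} (hs : IsPreconnected s) (hφ : ContinuousOn φ s)
    (hu : IsOpen u) (hv : IsOpen v) (huv : Disjoint u v) (hsuv : MapsTo φ s (u ∪ v)) :
    MapsTo φ s u ∨ MapsTo φ s v := by
  simpa only [mapsTo_iff_image_subset] using
    (hs.image φ hφ).subset_or_subset hu hv huv hsuv.image_subset

lemma union_subset_compl_of_union_eq_compl {α : Type*} {A B C : Set α} (hAB : Disjoint A B)
    (hunion : A ∪ B = Cᶜ) : B ∪ C ⊆ Aᶜ :=
  union_subset hAB.symm.subset_compl_right <|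
    subset_compl_comm.mp (subset_union_left.trans hunion.le)

theorem stmt_2_general (n : ℕ) (f g : (Fin n → ℂ) → ℂ)
    (hf : Differentiable ℂ f) (hg : Differentiable ℂ g)
    (Ω : Set (Fin n → ℂ)) (hΩ : IsConnected Ω)
    (C A B : Set ℂ)
    (hA : IsOpen A) (hB : IsOpen B)
    (hAB : Disjoint A B) (hunion : A ∪ B = Cᶜ)
    (hgz : ∀ z ∈ Ω, g z ≠ 0)
    (hh : ∀ z ∈ Ω, ∀ w ∈ C, f z + w * g z ≠ 0) :
    (∀ z ∈ Ω, ∀ w ∈ A ∪ C, f z + w * g z ≠ 0) ∨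
    (∀ z ∈ Ω, ∀ w ∈ B ∪ C, f z + w * g z ≠ 0) := by
  set φ : (Fin n → ℂ) → ℂ := fun z ↦ -f z / g z
  have hzero : ∀ z ∈ Ω, ∀ w, f z + w * g z = 0 ↔ w = φ z := fun z hz _ ↦
    add_mul_eq_zero_iff_eq_neg_div (hgz z hz)
  have hφ : ContinuousOn φ Ω := hf.continuous.neg.continuousOn.div hg.continuous.continuousOn hgz
  have hφAB : MapsTo φ Ω (A ∪ B) := fun z hz ↦
    hunion ▸ fun hφC ↦ hh z hz _ hφC ((hzero z hz _).2 rfl)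
  have hne : ∀ u, MapsTo φ Ω u → ∀ z ∈ Ω, ∀ w ∈ uᶜ, f z + w * g z ≠ 0 :=
    fun u hu z hz w hw h0 ↦ hw ((hzero z hz w).1 h0 ▸ hu hz)
  rcases hΩ.isPreconnected.mapsTo_or_mapsTo hφ hA hB hAB hφAB with hφA | hφB
  · exact .inr fun z hz w hw ↦
      hne A hφA z hz w (union_subset_compl_of_union_eq_compl hAB hunion hw)
  · exact .inl fun z hz w hw ↦
      hne B hφB z hz w (union_subset_compl_of_union_eq_compl hAB.symm
        (union_comm A B ▸ hunion) hw)

theorem stmt_2 (n : ℕ) (f g : (Fin n → ℂ) → ℂ)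
    (hf : Differentiable ℂ f) (hg : Differentiable ℂ g)
    (Ω : Set (Fin n → ℂ)) (hΩ : IsConnected Ω)
    (C A B : Set ℂ) (hC : IsClosed C)
    (hA : IsOpen A) (hB : IsOpen B)
    (hAc : IsConnected A) (hBc : IsConnected B)
    (hAB : Disjoint A B) (hunion : A ∪ B = Cᶜ)
    (hgz : ∀ z ∈ Ω, g z ≠ 0)
    (hh : ∀ z ∈ Ω, ∀ w ∈ C, f z + w * g z ≠ 0) :
    (∀ z ∈ Ω, ∀ w ∈ A ∪ C, f z + w * g z ≠ 0) ∨
    (∀ z ∈ Ω, ∀ w ∈ B ∪ C, f z + w * g z ≠ 0) :=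
  stmt_2_general n f g hf hg Ω hΩ C A B hA hB hAB hunion hgz hh
end

section
/- Let f be an entire function and f*(z) := conj(f(conj z)). Then |f(z)| > |f*(z)| for all z with Im z > μ if and only if w·f(z) + f*(z) ≠ 0 whenever |w| ≥ 1 and Im z > μ. -/
open Complex

/-! Pointwise, `w * a + b ≠ 0` for all `‖w‖ ≥ 1` means exactly `‖b‖ < ‖a‖` or `a = 0 ≠ b`.
The second alternative cannot occur in the half-plane: near such a point `‖f‖ < ‖f*‖`, so the
dichotomy forces `f` to vanish on a neighbourhood, hence identically by the identity theorem,
and then `f*` vanishes too. -/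

theorem forall_one_le_norm_mul_add_ne_zero_iff {𝕜 : Type*} [NormedDivisionRing 𝕜] {a b : 𝕜} :
    (∀ w : 𝕜, 1 ≤ ‖w‖ → w * a + b ≠ 0) ↔ ‖b‖ < ‖a‖ ∨ (a = 0 ∧ b ≠ 0) := by
  constructor
  · intro h
    by_cases ha : a = 0
    · exact Or.inr ⟨ha, by simpa [ha] using h 1 (by simp)⟩
    refine Or.inl (not_le.1 fun hab => h (-(b * a⁻¹)) ?_ ?_)
    · rw [norm_neg, norm_mul, norm_inv, ← div_eq_mul_inv]
      exact (one_le_div (norm_pos_iff.2 ha)).2 hab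
    · rw [neg_mul, mul_assoc, inv_mul_cancel₀ ha, mul_one, neg_add_cancel]
  · rintro (hab | ⟨rfl, hb⟩) w hw hwab
    · have hb : ‖b‖ = ‖w‖ * ‖a‖ := by rw [eq_neg_of_add_eq_zero_right hwab, norm_neg, norm_mul]
      nlinarith [norm_nonneg a]
    · exact hb (by simpa using hwab)

open Filter Topology in
theorem eventuallyEq_zero_of_forall_norm_lt_or_eq_zero {X E F : Type*} [TopologicalSpace X]
    [NormedAddCommGroup E] [NormedAddCommGroup F] {f : X → E} {g : X → F} {z : X}
    (hf : ContinuousAt f z) (hg : ContinuousAt g z) (hfz : f z = 0) (hgz : g z ≠ 0)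
    (h : ∀ᶠ x in 𝓝 z, ‖g x‖ < ‖f x‖ ∨ f x = 0) : f =ᶠ[𝓝 z] 0 := by
  have hlt : ∀ᶠ x in 𝓝 z, ‖f x‖ < ‖g x‖ :=
    hf.norm.eventually_lt hg.norm (by simpa [hfz] using hgz)
  filter_upwards [h, hlt] with x hx hx'
  exact hx.resolve_left hx'.not_gt

theorem stmt_3_general (f : ℂ → ℂ) (hf : Differentiable ℂ f) (μ : ℝ) :
    (∀ z : ℂ, μ < z.im →
        ‖(starRingEnd ℂ) (f ((starRingEnd ℂ) z))‖ < ‖f z‖) ↔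
    (∀ w z : ℂ, 1 ≤ ‖w‖ → μ < z.im →
        w * f z + (starRingEnd ℂ) (f ((starRingEnd ℂ) z)) ≠ 0) := by
  set g : ℂ → ℂ := fun z => (starRingEnd ℂ) (f ((starRingEnd ℂ) z))
  have hg : Continuous g := continuous_conj.comp (hf.continuous.comp continuous_conj)
  constructor
  · exact fun h w z hw hz =>
      forall_one_le_norm_mul_add_ne_zero_iff.2 (Or.inl (h z hz)) w hw
  intro h z hz
  have hdichotomy := fun x (hx : μ < x.im) =>
    forall_one_le_norm_mul_add_ne_zero_iff.1 fun w hw => h w x hw hx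
  refine (hdichotomy z hz).resolve_right fun ⟨hfz, hgz⟩ => hgz ?_
  have hloc : f =ᶠ[nhds z] 0 := by
    refine eventuallyEq_zero_of_forall_norm_lt_or_eq_zero hf.continuous.continuousAt
      hg.continuousAt hfz hgz ?_
    filter_upwards [(isOpen_lt continuous_const continuous_im).mem_nhds hz] with x hx
    exact (hdichotomy x hx).imp_right And.left
  have hzero : f = 0 := AnalyticOnNhd.eq_of_eventuallyEq (fun x _ => hf.analyticAt x)
    analyticOnNhd_const hloc
  simp [hzero]

theorem stmt_3 (f : ℂ → ℂ) (hf : Differentiable ℂ f) (μ : ℝ) (hμ : 0 ≤ μ) :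
    (∀ z : ℂ, μ < z.im →
        ‖(starRingEnd ℂ) (f ((starRingEnd ℂ) z))‖ < ‖f z‖) ↔
    (∀ w z : ℂ, 1 ≤ ‖w‖ → μ < z.im →
        w * f z + (starRingEnd ℂ) (f ((starRingEnd ℂ) z)) ≠ 0) :=
  stmt_3_general f hf μ
end

section
/- Fix μ ≥ 0 and λ > 0, and for entire functions f, g define the μ-Wronskian W_μ[f,g](z) = (1/(2μi))·(f(z+iμ)g(z−iμ) − f(z−iμ)g(z+iμ)). Let f = g + i·h with g, h real entire. Then |f(z)| > |f*(z)| for all z with Im z > μ if and only if W_λ[h,g](x) < 0 for all real λ > μ and all x ∈ ℝ. -/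
/-!
By Schwarz reflection `g (conj z) = conj (g z)` and likewise for `h`, so `f* z = g z - I * h z`.
Writing `a = g z`, `b = h z`, one has `‖a + I b‖² - ‖a - I b‖² = 4 Im (a b̄)`, while at `z = x + I λ`
the `λ`-Wronskian `(b ā - b̄ a) / (2 λ I)` equals `-Im (a b̄) / λ`. Both conditions therefore say
that `Im (g z · conj (h z)) > 0` whenever `Im z > μ`.
-/

open Complex ComplexConjugate Filter Topology
open scoped ComplexOrder

theorem apply_conj_eq_conj_apply {f : ℂ → ℂ} (hf : Differentiable ℂ f)
    (hf_real : ∀ x : ℝ, (f x).im = 0) (z : ℂ) : f (conj z) = conj (f z) := by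
  have hreflect : Differentiable ℂ (conj ∘ f ∘ conj) := fun w => by
    simpa using (hf (conj w)).conj_conj
  have hreal : Tendsto ((↑) : ℝ → ℂ) (𝓝[≠] 0) (𝓝[≠] 0) := by
    simpa using continuous_ofReal.continuousWithinAt.tendsto_nhdsWithin
      (x := (0 : ℝ)) (fun x hx => by simpa using hx)
  have heq : ∃ᶠ w in 𝓝[≠] (0 : ℂ), (conj ∘ f ∘ conj) w = f w :=
    hreal.frequently <| Frequently.of_forall fun x => by
      simp [conj_eq_iff_im.2 (hf_real x)]
  have := congrFun (AnalyticOnNhd.eq_of_frequently_eq (hreflect.differentiableOn.analyticOnNhd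
    isOpen_univ) (hf.differentiableOn.analyticOnNhd isOpen_univ) heq) (conj z)
  simpa [eq_comm] using this

theorem norm_sub_I_mul_lt_norm_add_I_mul_iff (a b : ℂ) :
    ‖a - I * b‖ < ‖a + I * b‖ ↔ 0 < (a * conj b).im := by
  have hre : (a * conj (I * b)).re = (a * conj b).im := by
    simp [mul_re, mul_im]; ring
  rw [← sq_lt_sq₀ (norm_nonneg _) (norm_nonneg _), Complex.sq_norm, Complex.sq_norm,
    normSq_add, normSq_sub, hre]
  constructor <;> intro h <;> linarith

theorem wronskian_eq_neg_im_div (a b : ℂ) {l : ℝ} (hl : l ≠ 0) :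
    (b * conj a - conj b * a) / (2 * l * I) = ((-(a * conj b).im / l : ℝ) : ℂ) := by
  have hsub : b * conj a - conj b * a = -((2 * (a * conj b).im : ℝ) * I) := by
    rw [← sub_conj]; simp only [map_mul, conj_conj]; ring
  rw [hsub, div_eq_iff (by simp [hl, I_ne_zero])]
  push_cast
  field_simp

theorem wronskian_neg_iff (a b : ℂ) {l : ℝ} (hl : 0 < l) :
    (b * conj a - conj b * a) / (2 * l * I) < 0 ↔ 0 < (a * conj b).im := by
  rw [wronskian_eq_neg_im_div a b hl.ne', ← ofReal_zero, real_lt_real, neg_div,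
    neg_lt_zero, div_pos_iff_of_pos_right hl]

theorem forall_im_gt_iff (μ : ℝ) (P : ℂ → Prop) :
    (∀ z : ℂ, μ < z.im → P z) ↔ ∀ l : ℝ, μ < l → ∀ x : ℝ, P (x + I * l) := by
  refine ⟨fun H l hl x => H _ (by simpa using hl), fun H z hz => ?_⟩
  simpa [mul_comm I, re_add_im] using H z.im hz z.re

theorem conj_ofReal_add_I_mul (x l : ℝ) : conj ((x : ℂ) + I * l) = x - I * l := by
  simp [sub_eq_add_neg]

theorem stmt_6 (g h : ℂ → ℂ) (hg : Differentiable ℂ g) (hh : Differentiable ℂ h)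
    (hgr : ∀ x : ℝ, (g x).im = 0) (hhr : ∀ x : ℝ, (h x).im = 0)
    (μ : ℝ) (hμ : 0 ≤ μ) :
    (∀ z : ℂ, μ < z.im →
        ‖(starRingEnd ℂ) ((g ((starRingEnd ℂ) z) + I * h ((starRingEnd ℂ) z)))‖ <
          ‖g z + I * h z‖) ↔
    (∀ l : ℝ, μ < l → ∀ x : ℝ,
        ((h (x + I * l) * g (x - I * l) - h (x - I * l) * g (x + I * l)) /
            (2 * l * I)) < 0) := by
  rw [forall_im_gt_iff]
  refine forall₂_congr fun l hl => forall_congr' fun x => ?_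
  rw [← conj_ofReal_add_I_mul, apply_conj_eq_conj_apply hg hgr, apply_conj_eq_conj_apply hh hhr,
    map_add, map_mul, conj_conj, conj_conj, conj_I, neg_mul, ← sub_eq_add_neg,
    norm_sub_I_mul_lt_norm_add_I_mul_iff, wronskian_neg_iff _ _ (hμ.trans_lt hl)]
end

section
/- There exists a real constant A > 1 such that for all n ∈ ℕ with n ≥ 1 and all z = x + iy ∈ ℂ with −nA < x ≤ 0 and |y| < |x|/2, one has |1 + z/n|ⁿ ≤ exp(x/2). -/
/-!
With `w = z / n` the claim is the `n`-th power of `‖1 + w‖ ≤ exp (w.re / 2)`. In the cone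
`|w.im| ≤ |w.re| / 2` with `u = w.re ≤ 0` this reduces to `(1 + u) ^ 2 + u ^ 2 / 4 ≤ exp u`, and
`exp u ≥ (1 + u / 4) ^ 4` dominates the left side as long as `u > -21/20`, which gives `A = 21/20`.
-/

open Complex

lemma one_add_sq_add_sq_div_four_le_exp {u : ℝ} (hu : -(21 / 20) < u) (hu0 : u ≤ 0) :
    (1 + u) ^ 2 + u ^ 2 / 4 ≤ Real.exp u := by
  have hexp : (1 + u / 4) ^ 4 ≤ Real.exp u := by
    have := Real.one_sub_div_pow_le_exp_neg (n := 4) (t := -u) (by push_cast; linarith)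
    rwa [neg_neg, neg_div, sub_neg_eq_add, Nat.cast_ofNat] at this
  -- `(1 + u/4)^4 - (1 + u)^2 - u^2/4 = -u (1 + 7u/8 - u^2/16 - u^3/256)`, nonnegative on `(-21/20, 0]`
  nlinarith [mul_nonneg (mul_nonneg (neg_nonneg.2 hu0) (neg_nonneg.2 hu0)) (sub_nonneg.2 hu0)]

lemma norm_one_add_le_exp_re_div_two {w : ℂ} (hre : -(21 / 20) < w.re) (hre0 : w.re ≤ 0)
    (him : |w.im| ≤ |w.re| / 2) : ‖1 + w‖ ≤ Real.exp (w.re / 2) := by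
  have him_sq : w.im ^ 2 ≤ w.re ^ 2 / 4 := by
    nlinarith [sq_abs w.im, sq_abs w.re, abs_nonneg w.im]
  refine (pow_le_pow_iff_left₀ (norm_nonneg _) (Real.exp_pos _).le two_ne_zero).1 ?_
  calc ‖1 + w‖ ^ 2 = (1 + w.re) ^ 2 + w.im ^ 2 := by
        rw [Complex.sq_norm, Complex.normSq_apply]; simp; ring
    _ ≤ (1 + w.re) ^ 2 + w.re ^ 2 / 4 := by gcongr
    _ ≤ Real.exp w.re := one_add_sq_add_sq_div_four_le_exp hre hre0
    _ = Real.exp (w.re / 2) ^ 2 := by rw [← Real.exp_nat_mul]; congr 1; ring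

theorem stmt_7 :
    ∃ A : ℝ, 1 < A ∧ ∀ n : ℕ, 1 ≤ n → ∀ z : ℂ,
      -(n * A) < z.re → z.re ≤ 0 → |z.im| < |z.re| / 2 →
      ‖1 + z / n‖ ^ n ≤ Real.exp (z.re / 2) := by
  refine ⟨21 / 20, by norm_num, fun n hn z hlow hre him => ?_⟩
  have hn0 : (0 : ℝ) < n := by exact_mod_cast hn
  have hw : ‖1 + z / n‖ ≤ Real.exp ((z / n).re / 2) := by
    refine norm_one_add_le_exp_re_div_two ?_ ?_ ?_ <;>
      simp only [div_natCast_re, div_natCast_im]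
    · rw [lt_div_iff₀ hn0]; linarith
    · exact div_nonpos_of_nonpos_of_nonneg hre hn0.le
    · rw [abs_div, abs_div, abs_of_pos hn0, div_div, mul_comm, ← div_div]; gcongr
  calc ‖1 + z / n‖ ^ n ≤ Real.exp ((z / n).re / 2) ^ n := by gcongr
    _ = Real.exp (z.re / 2) := by rw [← Real.exp_nat_mul, div_natCast_re]; field_simp
end

section
/- (Eneström–Kakeya) If p(z) = a₀ + a₁z + ⋯ + aₙzⁿ is a polynomial with real coefficients satisfying 0 ≤ a₀ ≤ a₁ ≤ ⋯ ≤ aₙ and aₙ > 0, then every complex zero of p lies in the closed unit disk. -/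
/-!
Multiplying by `1 - z` turns `p(z) = 0` into
`aₙ zⁿ⁺¹ = a₀ + ∑_{k<n} (aₖ₊₁ - aₖ) zᵏ⁺¹`.
All the real weights `a₀, aₖ₊₁ - aₖ` on the right are nonnegative and sum to `aₙ`, so for `|z| > 1`
the right side has modulus at most `aₙ |z|ⁿ < aₙ |z|ⁿ⁺¹`.
-/

open Polynomial Finset

theorem Finset.one_sub_mul_sum_range_mul_pow {R : Type*} [CommRing R] (a : ℕ → R) (x : R)
    (n : ℕ) :
    (1 - x) * ∑ k ∈ range (n + 1), a k * x ^ k =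
      a 0 + ∑ k ∈ range n, (a (k + 1) - a k) * x ^ (k + 1) - a n * x ^ (n + 1) := by
  induction n with
  | zero => simp only [zero_add, range_one, sum_singleton, range_zero, sum_empty]; ring
  | succ n ih =>
    rw [sum_range_succ, mul_add, ih, sum_range_succ]
    ring

theorem add_sum_range_sub_mul_pow_le {a : ℕ → ℝ} {n : ℕ} {r : ℝ} (ha0 : 0 ≤ a 0)
    (ha : ∀ k < n, a k ≤ a (k + 1)) (hr : 1 ≤ r) :
    a 0 + ∑ k ∈ range n, (a (k + 1) - a k) * r ^ (k + 1) ≤ a n * r ^ n := by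
  have hstep : ∀ k ∈ range n, 0 ≤ a (k + 1) - a k := fun k hk =>
    sub_nonneg.mpr (ha k (mem_range.mp hk))
  calc a 0 + ∑ k ∈ range n, (a (k + 1) - a k) * r ^ (k + 1)
      ≤ a 0 * r ^ n + ∑ k ∈ range n, (a (k + 1) - a k) * r ^ n := by
        refine add_le_add (le_mul_of_one_le_right ha0 (one_le_pow₀ hr))
          (sum_le_sum fun k hk => ?_)
        exact mul_le_mul_of_nonneg_left (pow_le_pow_right₀ hr (mem_range.mp hk)) (hstep k hk)
    _ = a n * r ^ n := by
        rw [← sum_mul, sum_range_sub a, ← add_mul, add_sub_cancel]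

theorem norm_add_sum_range_sub_mul_pow_le {𝕜 : Type*} [RCLike 𝕜] {a : ℕ → ℝ} {n : ℕ} {z : 𝕜}
    (ha0 : 0 ≤ a 0) (ha : ∀ k < n, a k ≤ a (k + 1)) (hz : 1 ≤ ‖z‖) :
    ‖(a 0 : 𝕜) + ∑ k ∈ range n, ((a (k + 1) - a k : ℝ) : 𝕜) * z ^ (k + 1)‖ ≤ a n * ‖z‖ ^ n := by
  have hstep : ∀ k ∈ range n, 0 ≤ a (k + 1) - a k := fun k hk =>
    sub_nonneg.mpr (ha k (mem_range.mp hk))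
  calc _ ≤ ‖(a 0 : 𝕜)‖ + ∑ k ∈ range n, ‖((a (k + 1) - a k : ℝ) : 𝕜) * z ^ (k + 1)‖ :=
        (norm_add_le _ _).trans (add_le_add le_rfl (norm_sum_le _ _))
    _ = a 0 + ∑ k ∈ range n, (a (k + 1) - a k) * ‖z‖ ^ (k + 1) := by
        rw [RCLike.norm_ofReal, abs_of_nonneg ha0]
        refine congrArg _ (sum_congr rfl fun k hk => ?_)
        rw [norm_mul, norm_pow, RCLike.norm_ofReal, abs_of_nonneg (hstep k hk)]
    _ ≤ a n * ‖z‖ ^ n := add_sum_range_sub_mul_pow_le ha0 ha hz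

theorem norm_le_one_of_aeval_eq_zero_of_coeff_mono {𝕜 : Type*} [RCLike 𝕜] {p : ℝ[X]}
    (h0 : 0 ≤ p.coeff 0) (hmono : ∀ k < p.natDegree, p.coeff k ≤ p.coeff (k + 1))
    (hlead : 0 < p.leadingCoeff) {z : 𝕜} (hz : aeval z p = 0) : ‖z‖ ≤ 1 := by
  by_contra! hz1
  set n := p.natDegree
  have hsum : ∑ k ∈ range (n + 1), (p.coeff k : 𝕜) * z ^ k = 0 := by
    simpa only [aeval_eq_sum_range, RCLike.real_smul_eq_coe_mul] using hz
  have hlead_eq : (p.leadingCoeff : 𝕜) * z ^ (n + 1) =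
      p.coeff 0 + ∑ k ∈ range n, ((p.coeff (k + 1) - p.coeff k : ℝ) : 𝕜) * z ^ (k + 1) := by
    have := one_sub_mul_sum_range_mul_pow (fun k => (p.coeff k : 𝕜)) z n
    push_cast
    rw [hsum, mul_zero] at this
    exact (sub_eq_zero.mp this.symm).symm
  have hle : p.leadingCoeff * ‖z‖ ^ (n + 1) ≤ p.leadingCoeff * ‖z‖ ^ n := by
    have := norm_add_sum_range_sub_mul_pow_le h0 hmono hz1.le
    rwa [← hlead_eq, norm_mul, norm_pow, RCLike.norm_ofReal, abs_of_pos hlead] at this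
  have hlt : ‖z‖ ^ n < ‖z‖ ^ (n + 1) := pow_lt_pow_right₀ hz1 n.lt_succ_self
  exact (mul_lt_mul_of_pos_left hlt hlead).not_ge hle

theorem stmt_9_general (p : Polynomial ℝ)
    (h0 : 0 ≤ p.coeff 0)
    (hmono : ∀ i j : ℕ, i ≤ j → j ≤ p.natDegree → p.coeff i ≤ p.coeff j)
    (hlead : 0 < p.coeff p.natDegree) :
    ∀ z : ℂ, Polynomial.aeval z p = 0 → ‖z‖ ≤ 1 :=
  fun _ hz => norm_le_one_of_aeval_eq_zero_of_coeff_mono h0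
    (fun k hk => hmono k (k + 1) k.le_succ hk) hlead hz

theorem stmt_9 (p : Polynomial ℝ) (hn : 1 ≤ p.natDegree)
    (h0 : 0 ≤ p.coeff 0)
    (hmono : ∀ i j : ℕ, i ≤ j → j ≤ p.natDegree → p.coeff i ≤ p.coeff j)
    (hlead : 0 < p.coeff p.natDegree) :
    ∀ z : ℂ, Polynomial.aeval z p = 0 → ‖z‖ ≤ 1 :=
  stmt_9_general p h0 hmono hlead
end

section
/- For every real number t with |t| ≤ 1, the entire function z ↦ cosh(z) + t has no zeros in the open right half-plane {z : Re z > 0}. -/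
open Complex

theorem stmt_10 (t : ℝ) (ht : |t| ≤ 1) :
    ∀ z : ℂ, 0 < z.re → Complex.cosh z + t ≠ 0 := by
  intro z hz h
  set x := z.re with hx
  set y := z.im with hy
  have hzeq : z = (x : ℂ) + (y : ℂ) * I := (Complex.re_add_im z).symm
  have hcosh : Complex.cosh z
      = (Real.cosh x * Real.cos y : ℝ) + (Real.sinh x * Real.sin y : ℝ) * I := by
    rw [hzeq, Complex.cosh_add, Complex.cosh_mul_I, Complex.sinh_mul_I]
    push_cast
    ring
  rw [hcosh] at h
  have him : Real.sinh x * Real.sin y = 0 := by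
    have := congrArg Complex.im h
    simpa only [Complex.add_im, Complex.mul_im, Complex.ofReal_im, Complex.ofReal_re,
      Complex.I_re, Complex.I_im, Complex.zero_im, mul_zero, mul_one, zero_mul,
      zero_add, add_zero] using this
  have hre : Real.cosh x * Real.cos y + t = 0 := by
    have := congrArg Complex.re h
    simpa only [Complex.add_re, Complex.mul_re, Complex.ofReal_im, Complex.ofReal_re,
      Complex.I_re, Complex.I_im, Complex.zero_re, mul_zero, mul_one, zero_mul,
      zero_add, add_zero, sub_zero] using this
  have hsinh : 0 < Real.sinh x := Real.sinh_pos_iff.2 hz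
  have hsin : Real.sin y = 0 := by
    rcases mul_eq_zero.1 him with h1 | h1
    · exact absurd h1 (ne_of_gt hsinh)
    · exact h1
  have hcossq : Real.cos y ^ 2 = 1 := by
    have := Real.sin_sq_add_cos_sq y
    nlinarith
  have habs : |Real.cos y| = 1 := by
    rw [← Real.sqrt_sq_eq_abs, hcossq, Real.sqrt_one]
  have hcoshx : 1 < Real.cosh x := Real.one_lt_cosh.2 (ne_of_gt hz)
  have : |Real.cosh x * Real.cos y| = |t| := by
    rw [show Real.cosh x * Real.cos y = -t by linarith]
    simp
  rw [abs_mul, habs, mul_one, abs_of_pos (lt_trans one_pos hcoshx)] at this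
  linarith
end

section
/- (de Bruijn's lemma on translated polynomials) Let p be a polynomial with real coefficients all of whose zeros lie in the closed strip {z : |Im z| ≤ δ}, and let λ > 0. Set μ = √(max(δ² − λ², 0)). Then |p(z + iλ)| > |p(z − iλ)| for all z with Im z > μ. -/
/-!
Since `p` has real coefficients, `‖p w‖ = ‖p (conj w)‖`, so over the complex roots `r` of `p`
(with multiplicity) `‖p w‖² = ‖c‖² ∏ ‖w - r‖ ‖conj w - r‖`, `c` the leading coefficient.
Comparing `w = z - iλ` with `w = z + iλ` factor by factor reduces the claim to one root
`r = a + ib`: with `t = Re z - a` and `y = Im z`, the squared factors differ by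
`8yλ(t² + y² + λ² - b²)`, which is positive once `b² ≤ δ² < y² + λ²`, i.e. once `Im z > μ`.
-/

open Complex Polynomial ComplexConjugate

theorem Multiset.prod_map_lt_prod_map_of_nonneg {ι : Type*} {s : Multiset ι} (hs : s ≠ 0)
    {f g : ι → ℝ} (hf : ∀ i ∈ s, 0 ≤ f i) (hfg : ∀ i ∈ s, f i < g i) :
    (s.map f).prod < (s.map g).prod := by
  obtain ⟨a, ha⟩ := Multiset.exists_mem_of_ne_zero hs
  obtain ⟨t, rfl⟩ := Multiset.exists_cons_of_mem ha
  have hft : ∀ i ∈ t, 0 ≤ f i := fun i hi => hf i (Multiset.mem_cons_of_mem hi)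
  have hfgt : ∀ i ∈ t, f i < g i := fun i hi => hfg i (Multiset.mem_cons_of_mem hi)
  have hgt : 0 < (t.map g).prod :=
    Multiset.prod_pos fun _ hx => by
      obtain ⟨i, hi, rfl⟩ := Multiset.mem_map.mp hx
      exact (hft i hi).trans_lt (hfgt i hi)
  simp only [Multiset.map_cons, Multiset.prod_cons]
  calc f a * (t.map f).prod
      ≤ f a * (t.map g).prod := mul_le_mul_of_nonneg_left
        (Multiset.prod_map_le_prod_map₀ f g hft fun i hi => (hfgt i hi).le) (hf a ha)
    _ < g a * (t.map g).prod := mul_lt_mul_of_pos_right (hfg a ha) hgt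

theorem norm_multiset_prod_map {ι α : Type*} [NormedField α] (s : Multiset ι) (f : ι → α) :
    ‖(s.map f).prod‖ = (s.map fun i => ‖f i‖).prod := by
  rw [← normHom_apply, map_multiset_prod, Multiset.map_map]
  rfl

theorem Complex.norm_mul_norm_conj_lt {z r : ℂ} {l : ℝ} (hz : 0 < z.im) (hl : 0 < l)
    (hr : r.im ^ 2 < z.im ^ 2 + l ^ 2) :
    ‖z - I * l - r‖ * ‖conj (z - I * l) - r‖ < ‖z + I * l - r‖ * ‖conj (z + I * l) - r‖ := by
  refine lt_of_pow_lt_pow_left₀ 2 (by positivity) ?_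
  simp only [mul_pow, Complex.sq_norm, normSq_apply, sub_re, sub_im, add_re, add_im, mul_re,
    mul_im, I_re, I_im, ofReal_re, ofReal_im, conj_re, conj_im]
  have hpos : 0 < (z.re - r.re) ^ 2 + z.im ^ 2 + l ^ 2 - r.im ^ 2 := by
    linarith [sq_nonneg (z.re - r.re)]
  nlinarith [mul_pos (mul_pos hz hl) hpos]

theorem Polynomial.norm_aeval_sq_eq_prod_aroots (p : ℝ[X]) (w : ℂ) :
    ‖aeval w p‖ ^ 2 =
      ‖p.leadingCoeff‖ ^ 2 * ((p.aroots ℂ).map fun r => ‖w - r‖ * ‖conj w - r‖).prod := by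
  have hsplit := IsAlgClosed.splits (p.map (algebraMap ℝ ℂ))
  have hconj : ‖aeval w p‖ = ‖aeval (conj w) p‖ := by rw [aeval_conj, norm_conj]
  rw [sq]
  nth_rw 2 [hconj]
  rw [hsplit.aeval_eq_prod_aroots, hsplit.aeval_eq_prod_aroots, Multiset.prod_map_mul]
  simp only [norm_mul, norm_multiset_prod_map, Complex.coe_algebraMap, Complex.norm_real]
  ring

theorem Polynomial.norm_aeval_sub_I_mul_lt_norm_aeval_add_I_mul {p : ℝ[X]} (hp : 0 < p.degree)
    {z : ℂ} {l : ℝ} (hz : 0 < z.im) (hl : 0 < l)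
    (hroots : ∀ r ∈ p.aroots ℂ, r.im ^ 2 < z.im ^ 2 + l ^ 2) :
    ‖aeval (z - I * l) p‖ < ‖aeval (z + I * l) p‖ := by
  have hp0 : p ≠ 0 := ne_zero_of_degree_gt hp
  have hroots_ne : p.aroots ℂ ≠ 0 := by
    rw [← Multiset.card_pos, aroots, IsAlgClosed.card_roots_map_eq_natDegree_of_injective _
      (algebraMap ℝ ℂ).injective]
    exact natDegree_pos_iff_degree_pos.mpr hp
  refine lt_of_pow_lt_pow_left₀ 2 (norm_nonneg _) ?_
  rw [norm_aeval_sq_eq_prod_aroots, norm_aeval_sq_eq_prod_aroots]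
  refine mul_lt_mul_of_pos_left ?_
    (pow_pos (norm_pos_iff.mpr (leadingCoeff_ne_zero.mpr hp0)) 2)
  exact Multiset.prod_map_lt_prod_map_of_nonneg hroots_ne (fun _ _ => by positivity)
    fun r hr => Complex.norm_mul_norm_conj_lt hz hl (hroots r hr)

theorem stmt_14_general (p : Polynomial ℝ) (hp : 0 < p.degree)
    (δ l : ℝ) (hl : 0 < l)
    (hroots : ∀ z : ℂ, Polynomial.aeval z p = 0 → |z.im| ≤ δ) :
    ∀ z : ℂ, Real.sqrt (max (δ ^ 2 - l ^ 2) 0) < z.im →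
      ‖Polynomial.aeval (z - I * l) p‖ <
        ‖Polynomial.aeval (z + I * l) p‖ := by
  intro z hz
  have hz_pos : 0 < z.im := (Real.sqrt_nonneg _).trans_lt hz
  have hδ : δ ^ 2 - l ^ 2 < z.im ^ 2 := (max_lt_iff.mp ((Real.sqrt_lt' hz_pos).mp hz)).1
  refine norm_aeval_sub_I_mul_lt_norm_aeval_add_I_mul hp hz_pos hl fun r hr => ?_
  have hr_im : |r.im| ^ 2 ≤ δ ^ 2 :=
    pow_le_pow_left₀ (abs_nonneg _) (hroots r (mem_aroots.mp hr).2) 2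
  rw [sq_abs] at hr_im
  linarith

theorem stmt_14 (p : Polynomial ℝ) (hp : 0 < p.degree)
    (δ l : ℝ) (hδ : 0 ≤ δ) (hl : 0 < l)
    (hroots : ∀ z : ℂ, Polynomial.aeval z p = 0 → |z.im| ≤ δ) :
    ∀ z : ℂ, Real.sqrt (max (δ ^ 2 - l ^ 2) 0) < z.im →
      ‖Polynomial.aeval (z - I * l) p‖ <
        ‖Polynomial.aeval (z + I * l) p‖ :=
  stmt_14_general p hp δ l hl hroots
end
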